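/- Let h : Z_2^{n-1} → Z_2 be arbitrary, g(x) = x_1 ⊕ ⋯ ⊕ x_{n-1} ⊕ b, and f = (h | h ⊕ g) on Z_2^n. If x = (x', 0) where x' ∈ Z_2^{n-1} is a linear structure of h with even Hamming weight, then ∑_{y ∈ Z_2^n} (f(y) ⊕ f(y ⊕ x)) equals either 0 or 2^n; consequently Δ_f(x) = ±2^n. -/

import Mathlib

open Finset

/-- `(-1)^{f(x)}` as an integer, for functions on `Z_2^{m} × Z_2 ≅ Z_2^{m+1}`
(the second coordinate is the most significant bit). -/
def bhatP {m : ℕ} (f : (Fin m → ZMod 2) × ZMod 2 → ZMod 2)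
    (x : (Fin m → ZMod 2) × ZMod 2) : ℤ :=
  (-1) ^ (f x).val

/-- Autocorrelation `Δ_f(α)`. -/
def autocorrP {m : ℕ} (f : (Fin m → ZMod 2) × ZMod 2 → ZMod 2)
    (a : (Fin m → ZMod 2) × ZMod 2) : ℤ :=
  ∑ x : (Fin m → ZMod 2) × ZMod 2, bhatP f x * bhatP f (x + a)

/-- Hamming weight. -/
def wt {m : ℕ} (x' : Fin m → ZMod 2) : ℕ :=
  (Finset.univ.filter fun i => x' i = 1).card

/- Since `wt x'` is even, the parity `∑ i, x' i` of `x'` vanishes, so translating by `(x', 0)`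
leaves the affine part `ε * (∑ i, y' i + b)` of `f` unchanged; hence `f y + f (y + (x', 0))`
equals the constant `c` of the linear structure of `h`. Both the sum and the autocorrelation
are then `2^(m+1)` times `c.val` and `(-1)^c.val` respectively. -/

lemma sum_eq_cast_wt {m : ℕ} (x : Fin m → ZMod 2) : ∑ i, x i = (wt x : ZMod 2) := by
  rw [wt, Finset.card_filter, Nat.cast_sum]
  refine Finset.sum_congr rfl fun i _ => ?_
  rcases (by decide : ∀ a : ZMod 2, a = 0 ∨ a = 1) (x i) with h0 | h0 <;> simp [h0]

lemma sum_eq_zero_of_even_wt {m : ℕ} {x : Fin m → ZMod 2} (hx : Even (wt x)) :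
    ∑ i, x i = 0 := by
  rw [sum_eq_cast_wt, ZMod.natCast_eq_zero_iff]
  exact hx.two_dvd

lemma card_prod_zmod_two (m : ℕ) : Fintype.card ((Fin m → ZMod 2) × ZMod 2) = 2 ^ (m + 1) := by
  simp [Fintype.card_prod, pow_succ]

lemma neg_one_pow_val_mul_neg_one_pow_val (u v : ZMod 2) :
    (-1 : ℤ) ^ u.val * (-1) ^ v.val = (-1) ^ (u + v).val := by
  fin_cases u <;> fin_cases v <;> rfl

section ConstantDerivative

variable {m : ℕ} {f : (Fin m → ZMod 2) × ZMod 2 → ZMod 2} {a : (Fin m → ZMod 2) × ZMod 2}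
  {c : ZMod 2}

lemma sum_val_add_of_derivative_const (hc : ∀ y, f y + f (y + a) = c) :
    ∑ y, ((f y + f (y + a)).val : ℤ) = 2 ^ (m + 1) * c.val := by
  simp only [hc, Finset.sum_const, Finset.card_univ, card_prod_zmod_two, nsmul_eq_mul]
  push_cast
  ring

lemma autocorrP_of_derivative_const (hc : ∀ y, f y + f (y + a) = c) :
    autocorrP f a = 2 ^ (m + 1) * (-1) ^ c.val := by
  simp only [autocorrP, bhatP, neg_one_pow_val_mul_neg_one_pow_val, hc, Finset.sum_const,
    Finset.card_univ, card_prod_zmod_two, nsmul_eq_mul]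
  push_cast
  ring

end ConstantDerivative

lemma concat_derivative_eq {m : ℕ} {h : (Fin m → ZMod 2) → ZMod 2} {b : ZMod 2}
    {f : (Fin m → ZMod 2) × ZMod 2 → ZMod 2}
    (hf : ∀ (x' : Fin m → ZMod 2) (ε : ZMod 2), f (x', ε) = h x' + ε * ((∑ i, x' i) + b))
    {x' : Fin m → ZMod 2} (hx : ∑ i, x' i = 0) (y : (Fin m → ZMod 2) × ZMod 2) :
    f y + f (y + (x', 0)) = h y.1 + h (y.1 + x') := by
  obtain ⟨y', ε⟩ := y
  simp only [Prod.mk_add_mk, add_zero, hf, Pi.add_apply, Finset.sum_add_distrib, hx]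
  rw [add_add_add_comm, CharTwo.add_self_eq_zero, add_zero]

theorem concat_linear_structure_sum_general {m : ℕ}
    (h : (Fin m → ZMod 2) → ZMod 2) (b : ZMod 2)
    (f : (Fin m → ZMod 2) × ZMod 2 → ZMod 2)
    (hf : ∀ (x' : Fin m → ZMod 2) (ε : ZMod 2),
      f (x', ε) = h x' + ε * ((∑ i, x' i) + b))
    (x' : Fin m → ZMod 2) (c : ZMod 2)
    (hls : ∀ y', h y' + h (y' + x') = c) (hx : Even (wt x')) :
    (∑ y : (Fin m → ZMod 2) × ZMod 2, ((f y + f (y + (x', 0))).val : ℤ) = 0 ∨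
      ∑ y : (Fin m → ZMod 2) × ZMod 2, ((f y + f (y + (x', 0))).val : ℤ) = 2 ^ (m + 1)) ∧
    (autocorrP f (x', 0) = 2 ^ (m + 1) ∨ autocorrP f (x', 0) = -2 ^ (m + 1)) := by
  have hc : ∀ y, f y + f (y + (x', 0)) = c := fun y => by
    rw [concat_derivative_eq hf (sum_eq_zero_of_even_wt hx), hls]
  rw [sum_val_add_of_derivative_const hc, autocorrP_of_derivative_const hc]
  rcases (by decide : ∀ a : ZMod 2, a = 0 ∨ a = 1) c with rfl | rfl
  · simp
  · simp [ZMod.val_one]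

theorem concat_linear_structure_sum {m : ℕ} (hm : 1 ≤ m)
    (h : (Fin m → ZMod 2) → ZMod 2) (b : ZMod 2)
    (f : (Fin m → ZMod 2) × ZMod 2 → ZMod 2)
    (hf : ∀ (x' : Fin m → ZMod 2) (ε : ZMod 2),
      f (x', ε) = h x' + ε * ((∑ i, x' i) + b))
    (x' : Fin m → ZMod 2) (c : ZMod 2)
    (hls : ∀ y', h y' + h (y' + x') = c) (hx : Even (wt x')) :
    (∑ y : (Fin m → ZMod 2) × ZMod 2, ((f y + f (y + (x', 0))).val : ℤ) = 0 ∨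
      ∑ y : (Fin m → ZMod 2) × ZMod 2, ((f y + f (y + (x', 0))).val : ℤ) = 2 ^ (m + 1)) ∧
    (autocorrP f (x', 0) = 2 ^ (m + 1) ∨ autocorrP f (x', 0) = -2 ^ (m + 1)) :=
  concat_linear_structure_sum_general h b f hf x' c hls hx
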